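/- For a ≥ 0.07 and b ∈ (0, 0.5), both g₁(a,b) = 216a³ - 36a²b² + 2ab⁴ + 36a²b - 4ab³ - 36a² + 6ab² - (1/4)b⁴ - 4ab + (1/2)b³ + 2a - (1/4)b² and g₂(a,b) = b² + 4a - b are strictly positive. -/

import Mathlib

/-!
With `u = 18a - b² + b - 1` one has `g₁ = u³ / 27 + ((2b - 1)(b - 2)(b + 1))² / 108`, so `g₁ > 0`
as soon as `u > 0`; and `18a ≥ 1.26 > 1 ≥ b² - b + 1` for `b ∈ (0, 1)`.
Completing the square, `g₂ = (b - 1/2)² + 4a - 1/4`, which is positive once `a > 1/16`.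
-/

noncomputable section

def borderFactorOne (a b : ℝ) : ℝ :=
  216 * a ^ 3 - 36 * a ^ 2 * b ^ 2 + 2 * a * b ^ 4 + 36 * a ^ 2 * b
    - 4 * a * b ^ 3 - 36 * a ^ 2 + 6 * a * b ^ 2 - (1 / 4) * b ^ 4 - 4 * a * b
    + (1 / 2) * b ^ 3 + 2 * a - (1 / 4) * b ^ 2

def borderFactorTwo (a b : ℝ) : ℝ := b ^ 2 + 4 * a - b

end

theorem borderFactorOne_eq (a b : ℝ) :
    borderFactorOne a b =
      (18 * a - b ^ 2 + b - 1) ^ 3 / 27 + ((2 * b - 1) * (b - 2) * (b + 1)) ^ 2 / 108 := by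
  unfold borderFactorOne
  ring

theorem borderFactorOne_pos {a b : ℝ} (h : 0 < 18 * a - b ^ 2 + b - 1) :
    0 < borderFactorOne a b := by
  rw [borderFactorOne_eq]
  positivity

theorem borderFactorTwo_eq (a b : ℝ) :
    borderFactorTwo a b = (b - 1 / 2) ^ 2 + (4 * a - 1 / 4) := by
  unfold borderFactorTwo
  ring

theorem borderFactorTwo_pos {a : ℝ} (ha : 1 / 16 < a) (b : ℝ) : 0 < borderFactorTwo a b := by
  rw [borderFactorTwo_eq]
  have : 0 < 4 * a - 1 / 4 := by linarith
  positivity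

theorem stmt_8 (a b : ℝ) (ha : 0.07 ≤ a) (hb1 : 0 < b) (hb2 : b < 0.5) :
    0 < 216 * a ^ 3 - 36 * a ^ 2 * b ^ 2 + 2 * a * b ^ 4 + 36 * a ^ 2 * b
        - 4 * a * b ^ 3 - 36 * a ^ 2 + 6 * a * b ^ 2 - (1 / 4) * b ^ 4 - 4 * a * b
        + (1 / 2) * b ^ 3 + 2 * a - (1 / 4) * b ^ 2 ∧
    0 < b ^ 2 + 4 * a - b := by
  norm_num at ha hb2
  have hb : 0 < b * (1 - b) := mul_pos hb1 (by linarith)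
  exact ⟨borderFactorOne_pos (by nlinarith), borderFactorTwo_pos (by linarith) b⟩
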